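/- Let (X,d) be a length space and let Γ act on X freely, properly discontinuously, cocompactly and by isometries. Fix x₀ ∈ X. Then the orbit map γ ↦ γ·x₀ is a quasi-isometry from (Γ, ρ_S) (any word metric) to (X,d): there exist λ ≥ 1 and C ≥ 0 such that λ⁻¹ρ_S(γ₁,γ₂) − C ≤ d(γ₁·x₀, γ₂·x₀) ≤ λρ_S(γ₁,γ₂) + C for all γ₁,γ₂ ∈ Γ, and the orbit Γ·x₀ is a net in X (every point of X is within bounded distance of the orbit). -/

import Mathlib

open Set

/-- The word norm associated to a generating set `S`. -/
noncomputable def wordNorm {G : Type*} [Group G] (S : Set G) (g : G) : ℝ :=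
  sInf {r : ℝ | ∃ l : List G, (∀ s ∈ l, s ∈ S) ∧ l.prod = g ∧ (l.length : ℝ) = r}

/-- The word metric associated to a generating set `S`. -/
noncomputable def wordDist {G : Type*} [Group G] (S : Set G) (g h : G) : ℝ :=
  wordNorm S (g⁻¹ * h)

/-!
Each generator moves `x₀` by at most `M`, so `d(γ₁x₀, γ₂x₀) ≤ M ρ_S(γ₁, γ₂)`.
Conversely, let `K ∋ x₀` be a compact set meeting every orbit. Proper discontinuity yields
`σ > 0` such that only finitely many `γ` bring a point of `K` within `σ` of `K`; let `N` bound
their word norms. Bisecting with approximate midpoints `k` times splits a pair of points at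
distance `d` into `2^k ≤ 2d/σ + 2` steps of length `< σ`; translating every intermediate point
into `K` writes `γ₁⁻¹γ₂` as a product of `2^k` of those finitely many elements, so
`ρ_S(γ₁, γ₂) ≤ (2N/σ) d + 2N`.
-/

open Filter Metric Topology

section WordNorm

variable {G : Type*} [Group G] {S : Set G}

theorem submonoid_closure_eq_top_of_inv_mem (hSsym : ∀ s ∈ S, s⁻¹ ∈ S)
    (hSgen : Subgroup.closure S = ⊤) : Submonoid.closure S = ⊤ := by
  have hinv : S⁻¹ ⊆ S := fun s hs => by simpa using hSsym _ hs
  rw [← Subgroup.top_toSubmonoid, ← hSgen, Subgroup.closure_toSubmonoid, union_eq_left.2 hinv]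

theorem wordNorm_nonneg (g : G) : 0 ≤ wordNorm S g :=
  Real.sInf_nonneg fun _ ⟨_, _, _, hr⟩ => hr ▸ Nat.cast_nonneg _

theorem wordNorm_le_length {l : List G} (hl : ∀ s ∈ l, s ∈ S) :
    wordNorm S l.prod ≤ l.length :=
  csInf_le ⟨0, fun _ ⟨_, _, _, hr⟩ => hr ▸ Nat.cast_nonneg _⟩ ⟨l, hl, rfl, rfl⟩

theorem exists_length_eq_wordNorm (hS : Submonoid.closure S = ⊤) (g : G) :
    ∃ l : List G, (∀ s ∈ l, s ∈ S) ∧ l.prod = g ∧ (l.length : ℝ) = wordNorm S g := by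
  classical
  have hwords : ∃ n, ∃ l : List G, (∀ s ∈ l, s ∈ S) ∧ l.prod = g ∧ l.length = n := by
    obtain ⟨l, hl, hprod⟩ := Submonoid.exists_list_of_mem_closure (hS.symm ▸ Submonoid.mem_top g)
    exact ⟨_, l, hl, hprod, rfl⟩
  obtain ⟨l, hl, rfl, hlen⟩ := Nat.find_spec hwords
  refine ⟨l, hl, rfl, le_antisymm ?_ (wordNorm_le_length hl)⟩
  refine le_csInf ⟨_, l, hl, rfl, rfl⟩ ?_
  rintro _ ⟨l', hl', hprod, rfl⟩
  exact_mod_cast hlen ▸ Nat.find_min' hwords ⟨l', hl', hprod, rfl⟩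

theorem wordNorm_mul_le (hS : Submonoid.closure S = ⊤) (g h : G) :
    wordNorm S (g * h) ≤ wordNorm S g + wordNorm S h := by
  obtain ⟨l₁, hl₁, rfl, hlen₁⟩ := exists_length_eq_wordNorm hS g
  obtain ⟨l₂, hl₂, rfl, hlen₂⟩ := exists_length_eq_wordNorm hS h
  have := wordNorm_le_length (S := S) (l := l₁ ++ l₂) fun s hs =>
    (List.mem_append.1 hs).elim (hl₁ s) (hl₂ s)
  rwa [List.prod_append, List.length_append, Nat.cast_add, hlen₁, hlen₂] at this

end WordNorm

theorem exists_two_pow_gt_le {t : ℝ} (ht : 0 ≤ t) :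
    ∃ k : ℕ, t < 2 ^ k ∧ (2 : ℝ) ^ k ≤ 2 * t + 2 := by
  obtain ⟨n, hle, hlt⟩ := exists_nat_pow_near (by linarith : (1 : ℝ) ≤ t + 1) one_lt_two
  exact ⟨n + 1, by linarith, by rw [pow_succ]; linarith⟩

theorem exists_quasiIsometry_constants {α : Type*} {w d : α → α → ℝ} {A B M C : ℝ}
    (hC : 0 ≤ C) (hBC : B ≤ C) (hd : ∀ a b, 0 ≤ d a b) (hw : ∀ a b, 0 ≤ w a b)
    (hlow : ∀ a b, w a b ≤ A * d a b + B) (hup : ∀ a b, d a b ≤ M * w a b) :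
    ∃ lam ≥ (1 : ℝ), ∀ a b, lam⁻¹ * w a b - C ≤ d a b ∧ d a b ≤ lam * w a b + C := by
  set lam := max 1 (max A M)
  have hlam : 1 ≤ lam := le_max_left _ _
  refine ⟨lam, hlam, fun a b => ⟨?_, ?_⟩⟩
  · have hA : A * d a b ≤ lam * d a b :=
      mul_le_mul_of_nonneg_right ((le_max_left _ _).trans (le_max_right _ _)) (hd a b)
    have hClam : C ≤ lam * C := le_mul_of_one_le_left hC hlam
    rw [sub_le_iff_le_add, inv_mul_le_iff₀ (by positivity), mul_add]
    linarith [hlow a b]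
  · have hM : M * w a b ≤ lam * w a b :=
      mul_le_mul_of_nonneg_right ((le_max_right _ _).trans (le_max_right _ _)) (hw a b)
    linarith [hup a b]

section Action

variable {Γ X : Type*} [Group Γ] [MetricSpace X] [MulAction Γ X]

theorem ProperlyDiscontinuousSMul.exists_pos_finite_setOf_dist_lt [ContinuousConstSMul Γ X]
    [ProperlyDiscontinuousSMul Γ X] {K : Set X} (hK : IsCompact K) :
    ∃ σ > 0, {γ : Γ | ∃ a ∈ K, ∃ b ∈ K, dist (γ • a) b < σ}.Finite := by
  suffices ∃ σ > 0, ∀ γ : Γ, ∀ a ∈ K, ∀ b ∈ K, dist (γ • a) b < σ →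
      ((γ • ·) '' K ∩ K).Nonempty by
    obtain ⟨σ, hσ, hmeet⟩ := this
    exact ⟨σ, hσ, (finite_disjoint_inter_image hK hK).subset
      fun γ ⟨a, ha, b, hb, hab⟩ => hmeet γ a ha b hb hab⟩
  by_contra! hfar
  choose g a ha b hb hab hdisj using fun n : ℕ => hfar (1 / (n + 1)) Nat.one_div_pos_of_nat
  obtain ⟨b₀, hb₀, φ, hφ, hlim⟩ := hK.tendsto_subseq hb
  have hlim' : Tendsto (fun n => g (φ n) • a (φ n)) atTop (𝓝 b₀) :=
    hlim.congr_dist <| squeeze_zero (fun _ => dist_nonneg)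
      (fun n => (dist_comm _ _).trans_le (hab (φ n)).le)
      (tendsto_one_div_add_atTop_nhds_zero_nat.comp hφ.tendsto_atTop)
  have hfin : (range (g ∘ φ)).Finite :=
    (finite_disjoint_inter_image hK hlim'.isCompact_insert_range).subset <| by
      rintro _ ⟨n, rfl⟩
      exact ⟨_, mem_image_of_mem _ (ha (φ n)), mem_insert_of_mem _ (mem_range_self n)⟩
  -- `b₀` is a limit of points of finitely many compact translates of `K`, so lies in one of them
  have hclosed : IsClosed (⋃ γ ∈ range (g ∘ φ), (γ • ·) '' K) :=
    (hfin.isCompact_biUnion fun γ _ => hK.image (continuous_const_smul γ)).isClosed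
  obtain ⟨_, ⟨m, rfl⟩, hm⟩ := mem_iUnion₂.1 <| hclosed.mem_of_tendsto hlim' <|
    Eventually.of_forall fun n => mem_biUnion (mem_range_self n) (mem_image_of_mem _ (ha (φ n)))
  exact eq_empty_iff_forall_notMem.1 (hdisj (φ m)) b₀ ⟨hm, hb₀⟩

variable [IsIsometricSMul Γ X] {S : Set Γ}

theorem dist_list_prod_smul_le {M : ℝ} {x : X} (hM : ∀ s ∈ S, dist x (s • x) ≤ M) :
    ∀ l : List Γ, (∀ s ∈ l, s ∈ S) → dist x (l.prod • x) ≤ M * l.length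
  | [], _ => by simp
  | s :: l, hl => by
    rw [List.forall_mem_cons] at hl
    calc dist x ((s :: l).prod • x) ≤ dist x (s • x) + dist (s • x) (s • l.prod • x) := by
          rw [List.prod_cons, mul_smul]; exact dist_triangle _ _ _
      _ ≤ M + M * l.length := add_le_add (hM s hl.1)
          ((dist_smul s _ _).trans_le (dist_list_prod_smul_le hM l hl.2))
      _ = M * (s :: l).length := by rw [List.length_cons]; push_cast; ring

theorem dist_smul_le_mul_wordDist (hS : Submonoid.closure S = ⊤) {M : ℝ} {x : X}
    (hM : ∀ s ∈ S, dist x (s • x) ≤ M) (γ₁ γ₂ : Γ) :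
    dist (γ₁ • x) (γ₂ • x) ≤ M * wordDist S γ₁ γ₂ := by
  obtain ⟨l, hl, hprod, hlen⟩ := exists_length_eq_wordNorm hS (γ₁⁻¹ * γ₂)
  calc dist (γ₁ • x) (γ₂ • x) = dist x (l.prod • x) := by
        rw [hprod, ← dist_smul γ₁⁻¹, inv_smul_smul, mul_smul]
    _ ≤ M * l.length := dist_list_prod_smul_le hM l hl
    _ = M * wordDist S γ₁ γ₂ := by rw [hlen]; rfl

variable {K : Set X} {σ N : ℝ}

theorem wordNorm_mul_inv_le_of_dist_lt_two_pow (hS : Submonoid.closure S = ⊤)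
    (hmid : ∀ x y : X, ∀ ε > (0 : ℝ), ∃ m : X,
      dist x m ≤ dist x y / 2 + ε ∧ dist m y ≤ dist x y / 2 + ε)
    (hK : ∀ x : X, ∃ γ : Γ, γ • x ∈ K)
    (hN : ∀ γ : Γ, (∃ a ∈ K, ∃ b ∈ K, dist (γ • a) b < σ) → wordNorm S γ ≤ N) (k : ℕ) :
    ∀ {x y : X} {δ δ' : Γ}, δ • x ∈ K → δ' • y ∈ K → dist x y < 2 ^ k * σ →
      wordNorm S (δ * δ'⁻¹) ≤ N * 2 ^ k := by
  induction k with
  | zero =>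
    intro x y δ δ' hx hy hxy
    have hclose : dist ((δ * δ'⁻¹) • δ' • y) (δ • x) < σ := by
      rw [smul_smul, inv_mul_cancel_right, dist_smul, dist_comm]
      simpa using hxy
    simpa using hN _ ⟨_, hy, _, hx, hclose⟩
  | succ k ih =>
    intro x y δ δ' hx hy hxy
    obtain ⟨m, hxm, hmy⟩ := hmid x y ((2 ^ (k + 1) * σ - dist x y) / 4) (by linarith)
    obtain ⟨δm, hm⟩ := hK m
    have hhalf : dist x y / 2 + (2 ^ (k + 1) * σ - dist x y) / 4 < 2 ^ k * σ := by
      rw [pow_succ] at hxy ⊢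
      linarith
    calc wordNorm S (δ * δ'⁻¹) = wordNorm S (δ * δm⁻¹ * (δm * δ'⁻¹)) := by group
      _ ≤ wordNorm S (δ * δm⁻¹) + wordNorm S (δm * δ'⁻¹) := wordNorm_mul_le hS _ _
      _ ≤ N * 2 ^ k + N * 2 ^ k :=
          add_le_add (ih hx hm (by linarith)) (ih hm hy (by linarith))
      _ = N * 2 ^ (k + 1) := by ring

theorem wordDist_le_mul_dist_add (hS : Submonoid.closure S = ⊤)
    (hmid : ∀ x y : X, ∀ ε > (0 : ℝ), ∃ m : X,
      dist x m ≤ dist x y / 2 + ε ∧ dist m y ≤ dist x y / 2 + ε)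
    (hK : ∀ x : X, ∃ γ : Γ, γ • x ∈ K) (hσ : 0 < σ)
    (hN : ∀ γ : Γ, (∃ a ∈ K, ∃ b ∈ K, dist (γ • a) b < σ) → wordNorm S γ ≤ N)
    {x₀ : X} (hx₀ : x₀ ∈ K) (γ₁ γ₂ : Γ) :
    wordDist S γ₁ γ₂ ≤ 2 * N / σ * dist (γ₁ • x₀) (γ₂ • x₀) + 2 * N := by
  have hN0 : 0 ≤ N := (wordNorm_nonneg 1).trans (hN 1 ⟨x₀, hx₀, x₀, hx₀, by simpa using hσ⟩)
  set d := dist (γ₁ • x₀) (γ₂ • x₀)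
  obtain ⟨k, hk, hk'⟩ := exists_two_pow_gt_le (div_nonneg dist_nonneg hσ.le : 0 ≤ d / σ)
  have hchain := wordNorm_mul_inv_le_of_dist_lt_two_pow hS hmid hK hN k
    (δ := γ₁⁻¹) (δ' := γ₂⁻¹) (by rwa [inv_smul_smul]) (by rwa [inv_smul_smul])
    ((div_lt_iff₀ hσ).1 hk)
  rw [inv_inv] at hchain
  calc wordDist S γ₁ γ₂ ≤ N * 2 ^ k := hchain
    _ ≤ N * (2 * (d / σ) + 2) := by gcongr
    _ = 2 * N / σ * d + 2 * N := by ring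

theorem exists_dist_smul_le (hKb : Bornology.IsBounded K) (hK : ∀ x : X, ∃ γ : Γ, γ • x ∈ K)
    {x₀ : X} (hx₀ : x₀ ∈ K) : ∃ R ≥ 0, ∀ x : X, ∃ γ : Γ, dist x (γ • x₀) ≤ R := by
  obtain ⟨R, hR⟩ := hKb.subset_closedBall x₀
  refine ⟨R, dist_self x₀ ▸ hR hx₀, fun x => ?_⟩
  obtain ⟨γ, hγ⟩ := hK x
  exact ⟨γ⁻¹, by rw [← dist_smul γ, smul_inv_smul]; exact hR hγ⟩

end Action

theorem milnor_svarc_general {Γ X : Type*} [Group Γ] [MetricSpace X] [MulAction Γ X]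
    [ProperlyDiscontinuousSMul Γ X]
    -- X is a length space: approximate midpoints exist
    (hlength : ∀ x y : X, ∀ ε > (0:ℝ), ∃ m : X,
      dist x m ≤ dist x y / 2 + ε ∧ dist m y ≤ dist x y / 2 + ε)
    -- the action is by isometries
    (hiso : ∀ (γ : Γ) (a b : X), dist (γ • a) (γ • b) = dist a b)
    -- the action is cocompact
    (hcc : ∃ K : Set X, IsCompact K ∧ ∀ x : X, ∃ γ : Γ, γ • x ∈ K)
    -- a finite symmetric generating set of Γ
    (S : Set Γ) (hSfin : S.Finite) (hSsym : ∀ s ∈ S, s⁻¹ ∈ S)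
    (hSgen : Subgroup.closure S = ⊤)
    (x₀ : X) :
    ∃ lam ≥ (1:ℝ), ∃ C ≥ (0:ℝ),
      (∀ γ₁ γ₂ : Γ,
        lam⁻¹ * wordDist S γ₁ γ₂ - C ≤ dist (γ₁ • x₀) (γ₂ • x₀) ∧
        dist (γ₁ • x₀) (γ₂ • x₀) ≤ lam * wordDist S γ₁ γ₂ + C) ∧
      (∀ x : X, ∃ γ : Γ, dist x (γ • x₀) ≤ C) := by
  have : IsIsometricSMul Γ X := ⟨fun γ => Isometry.of_dist_eq (hiso γ)⟩
  have hS := submonoid_closure_eq_top_of_inv_mem hSsym hSgen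
  obtain ⟨K₀, hK₀, hK₀cover⟩ := hcc
  have hK : IsCompact (insert x₀ K₀) := hK₀.insert x₀
  have hcover : ∀ x : X, ∃ γ : Γ, γ • x ∈ insert x₀ K₀ :=
    fun x => (hK₀cover x).imp fun _ => mem_insert_of_mem x₀
  obtain ⟨σ, hσ, hfin⟩ := ProperlyDiscontinuousSMul.exists_pos_finite_setOf_dist_lt (Γ := Γ) hK
  obtain ⟨N, hN⟩ := (hfin.image (wordNorm S)).bddAbove
  obtain ⟨M, hM⟩ := (hSfin.image fun s => dist x₀ (s • x₀)).bddAbove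
  obtain ⟨R, hR, hnet⟩ := exists_dist_smul_le hK.isBounded hcover (mem_insert x₀ K₀)
  have hRC : R ≤ max R (2 * N) := le_max_left _ _
  obtain ⟨lam, hlam, hqi⟩ := exists_quasiIsometry_constants (hR.trans hRC) (le_max_right _ _)
    (fun _ _ => dist_nonneg) (fun _ _ => wordNorm_nonneg _)
    (wordDist_le_mul_dist_add hS hlength hcover hσ (fun _ hγ => hN (mem_image_of_mem _ hγ))
      (mem_insert x₀ K₀))
    (dist_smul_le_mul_wordDist hS fun _ hs => hM (mem_image_of_mem _ hs))
  exact ⟨lam, hlam, max R (2 * N), hR.trans hRC, hqi,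
    fun x => (hnet x).imp fun _ h => h.trans hRC⟩

/-- Milnor–Švarc lemma: if `Γ` acts freely, properly discontinuously, cocompactly and by
isometries on a length space `X`, then for any `x₀ ∈ X` the orbit map `γ ↦ γ·x₀` is a
quasi-isometry from `(Γ, ρ_S)` to `(X,d)`, and the orbit `Γ·x₀` is a net in `X`. -/
theorem milnor_svarc {Γ X : Type*} [Group Γ] [MetricSpace X] [MulAction Γ X]
    [ProperlyDiscontinuousSMul Γ X]
    -- X is a length space: approximate midpoints exist
    (hlength : ∀ x y : X, ∀ ε > (0:ℝ), ∃ m : X,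
      dist x m ≤ dist x y / 2 + ε ∧ dist m y ≤ dist x y / 2 + ε)
    -- the action is by isometries
    (hiso : ∀ (γ : Γ) (a b : X), dist (γ • a) (γ • b) = dist a b)
    -- the action is free
    (hfree : ∀ (γ : Γ) (x : X), γ • x = x → γ = 1)
    -- the action is cocompact
    (hcc : ∃ K : Set X, IsCompact K ∧ ∀ x : X, ∃ γ : Γ, γ • x ∈ K)
    -- a finite symmetric generating set of Γ
    (S : Set Γ) (hSfin : S.Finite) (hSsym : ∀ s ∈ S, s⁻¹ ∈ S)
    (hSgen : Subgroup.closure S = ⊤)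
    (x₀ : X) :
    ∃ lam ≥ (1:ℝ), ∃ C ≥ (0:ℝ),
      (∀ γ₁ γ₂ : Γ,
        lam⁻¹ * wordDist S γ₁ γ₂ - C ≤ dist (γ₁ • x₀) (γ₂ • x₀) ∧
        dist (γ₁ • x₀) (γ₂ • x₀) ≤ lam * wordDist S γ₁ γ₂ + C) ∧
      (∀ x : X, ∃ γ : Γ, dist x (γ • x₀) ≤ C) :=
  milnor_svarc_general hlength hiso hcc S hSfin hSsym hSgen x₀
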